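/- arXiv:2511.21487 — 2 statements merged into one kernel-verified Lean document; each statement's English description precedes it below -/
import Mathlib

section
/- Let ρ₀ be a pure stabilizer state with stabilizer generators s_1, g_2, …, g_n such that the single-qubit operator Z_j anticommutes with s_1 and commutes with all g_i. Let T = diag(1, e^{iπ/4}) act on qubit j. Then TρT† = 2^{-n} (I + (Z̄ − Ȳ)/√2) ∏_{i=2}^n (I + g_i), where X̄ := Z_j, Z̄ := s_1 and Ȳ := i X̄ Z̄. -/
/-!
On qubit `j` both `Z_j` and `T` are diagonal, so `T = a + b Z_j` with `a = (1 + ω)/2`,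
`b = (1 - ω)/2`, `ω = e^{iπ/4}`. As `Z_j² = 1`, `T` commutes with every `gᵢ` and `T T† = 1`, while
moving `T` past the anticommuting `s₁` flips the sign of `b`:
`T s₁ T† = s₁ (a - b Z_j)(ā + b̄ Z_j) = (Re ω) s₁ - i (Im ω) Z_j s₁`.
-/

open Matrix BigOperators Finset

/-- The four single-qubit Pauli matrices `I, X, Y, Z`. -/
noncomputable def pauli1 : Fin 4 → Matrix (Fin 2) (Fin 2) ℂ :=
  ![(1 : Matrix (Fin 2) (Fin 2) ℂ),
    !![0, 1; 1, 0],
    !![0, -Complex.I; Complex.I, 0],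
    !![1, 0; 0, -1]]

/-- The `n`-qubit Pauli string `⨂ₖ pauli1 (s k)` as a matrix on `(Fin n → Fin 2)`. -/
noncomputable def pauliString {n : ℕ} (s : Fin n → Fin 4) :
    Matrix (Fin n → Fin 2) (Fin n → Fin 2) ℂ :=
  Matrix.of fun i j => ∏ k, pauli1 (s k) (i k) (j k)

/-- `M` is a Pauli operator with phase `±1`. -/
def IsPauliPM {n : ℕ} (M : Matrix (Fin n → Fin 2) (Fin n → Fin 2) ℂ) : Prop :=
  ∃ (ε : ℂ) (s : Fin n → Fin 4), (ε = 1 ∨ ε = -1) ∧ M = ε • pauliString s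

/-- `M` is a `±1`-phase Pauli operator whose support is contained in `A`. -/
def SuppIn {n : ℕ} (A : Finset (Fin n)) (M : Matrix (Fin n → Fin 2) (Fin n → Fin 2) ℂ) : Prop :=
  ∃ (ε : ℂ) (s : Fin n → Fin 4), (ε = 1 ∨ ε = -1) ∧ M = ε • pauliString s ∧
    ∀ k ∉ A, s k = 0

/-- The element `∏_{i : f i} g i` of the group generated by the (commuting) `g i`. -/
noncomputable def grpElem {n m : ℕ} (g : Fin m → Matrix (Fin n → Fin 2) (Fin n → Fin 2) ℂ)
    (f : Fin m → Bool) : Matrix (Fin n → Fin 2) (Fin n → Fin 2) ℂ :=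
  ((List.finRange m).map (fun i => if f i then g i else 1)).prod

/-- Mixed-state stabilizer 2-Rényi entropy
`M̃₂(ρ) = −log₂( Σ_P Tr(ρP)⁴ / Σ_P Tr(ρP)² )`. -/
noncomputable def sre2 {n : ℕ} (ρ : Matrix (Fin n → Fin 2) (Fin n → Fin 2) ℂ) : ℝ :=
  - Real.logb 2 (((∑ P : Fin n → Fin 4, ((ρ * pauliString P).trace) ^ 4) /
      (∑ P : Fin n → Fin 4, ((ρ * pauliString P).trace) ^ 2)).re)

/-- A single-qubit gate `M` acting on qubit `j` of `n` qubits (identity elsewhere). -/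
noncomputable def embed {n : ℕ} (j : Fin n) (M : Matrix (Fin 2) (Fin 2) ℂ) :
    Matrix (Fin n → Fin 2) (Fin n → Fin 2) ℂ :=
  Matrix.of fun a b => ∏ k, (if k = j then M else (1 : Matrix (Fin 2) (Fin 2) ℂ)) (a k) (b k)

/-- The T gate `diag(1, e^{iπ/4})`. -/
noncomputable def Tgate : Matrix (Fin 2) (Fin 2) ℂ :=
  !![1, 0; 0, Complex.exp (Complex.I * (Real.pi / 4))]

open Complex

section AffineInvolution

variable {R : Type*} [Ring R] [Algebra ℂ R] {Z : R}

theorem affine_mul_affine (hZ : Z * Z = 1) (a b a' b' : ℂ) :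
    (a • 1 + b • Z) * (a' • 1 + b' • Z) = (a * a' + b * b') • 1 + (a * b' + b * a') • Z := by
  simp only [mul_add, add_mul, smul_mul_smul_comm, one_mul, mul_one, hZ]
  module

theorem affine_mul_mul_affine_of_anticommute (hZ : Z * Z = 1) {s : R} (hs : Z * s = -(s * Z))
    (a b a' b' : ℂ) :
    (a • 1 + b • Z) * s * (a' • 1 + b' • Z)
      = (a * a' - b * b') • s - (a * b' - b * a') • (Z * s) := by
  have hsZ : s * Z = -(Z * s) := by rw [hs, neg_neg]
  have hZsZ : Z * s * Z = -s := by rw [mul_assoc, hsZ, mul_neg, ← mul_assoc, hZ, one_mul]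
  simp only [mul_add, add_mul, smul_mul_assoc, mul_smul_comm, one_mul, mul_one, hZsZ, hsZ]
  module

theorem Commute.affine_left {x : R} (h : Commute Z x) (a b : ℂ) : Commute (a • 1 + b • Z) x :=
  ((Commute.one_left x).smul_left a).add_left (h.smul_left b)

end AffineInvolution

section Qubit

variable {n : ℕ}

noncomputable abbrev pauliZ (j : Fin n) : Matrix (Fin n → Fin 2) (Fin n → Fin 2) ℂ :=
  pauliString fun k => if k = j then 3 else 0

theorem embed_diagonal (j : Fin n) (d : Fin 2 → ℂ) :
    embed j (diagonal d) = diagonal fun a => d (a j) := by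
  ext a b
  rw [embed, of_apply]
  by_cases hab : a = b
  · subst hab
    rw [Fintype.prod_eq_single j fun k hk => by simp [hk], if_pos rfl, diagonal_apply_eq,
      diagonal_apply_eq]
  · obtain ⟨k, hk⟩ := Function.ne_iff.mp hab
    rw [diagonal_apply_ne _ hab]
    refine Finset.prod_eq_zero (mem_univ k) ?_
    split_ifs <;> simp [hk]

theorem pauliZ_eq_embed (j : Fin n) : pauliZ j = embed j (pauli1 3) := by
  ext a b
  simp only [pauliString, embed, of_apply]
  refine Finset.prod_congr rfl fun k _ => ?_
  split_ifs <;> rfl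

theorem pauli1_three : pauli1 3 = diagonal ![1, -1] := by
  ext x y
  fin_cases x <;> fin_cases y <;> simp [pauli1]

theorem pauliZ_mul_self (j : Fin n) : pauliZ j * pauliZ j = 1 := by
  rw [pauliZ_eq_embed, pauli1_three, embed_diagonal, diagonal_mul_diagonal, ← diagonal_one]
  congr 1
  funext a
  generalize a j = x
  fin_cases x <;> simp

theorem embed_diagonal_eq_affine (j : Fin n) (d : Fin 2 → ℂ) :
    embed j (diagonal d) = ((d 0 + d 1) / 2) • 1 + ((d 0 - d 1) / 2) • pauliZ j := by
  rw [pauliZ_eq_embed, pauli1_three, embed_diagonal, embed_diagonal, ← diagonal_one,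
    ← diagonal_smul, ← diagonal_smul, diagonal_add]
  congr 1
  funext a
  simp only [Pi.smul_apply, smul_eq_mul, mul_one]
  generalize a j = x
  fin_cases x <;> simp <;> ring

theorem embed_diagonal_conjTranspose (j : Fin n) (d : Fin 2 → ℂ) :
    (embed j (diagonal d))ᴴ = embed j (diagonal (star d)) := by
  rw [embed_diagonal, embed_diagonal, diagonal_conjTranspose]
  rfl

theorem ofReal_sqrt_two_sq : (√2 : ℂ) ^ 2 = 2 := by norm_cast; simp

theorem ofReal_sqrt_two_ne_zero : (√2 : ℂ) ≠ 0 := by norm_cast; positivity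

theorem Tgate_eq_diagonal : Tgate = diagonal ![1, (1 + I) / (√2 : ℂ)] := by
  have hω : exp (I * (Real.pi / 4)) = (1 + I) / (√2 : ℂ) := by
    rw [mul_comm, exp_mul_I, ← ofReal_ofNat, ← ofReal_div, ← ofReal_cos, ← ofReal_sin,
      Real.cos_pi_div_four, Real.sin_pi_div_four]
    have := ofReal_sqrt_two_ne_zero
    push_cast
    field_simp
    linear_combination (1 + I) * ofReal_sqrt_two_sq
  ext x y
  fin_cases x <;> fin_cases y <;> simp [Tgate, hω]

theorem embed_Tgate_mul_conjTranspose (j : Fin n) : embed j Tgate * (embed j Tgate)ᴴ = 1 := by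
  rw [Tgate_eq_diagonal, embed_diagonal_conjTranspose, embed_diagonal_eq_affine,
    embed_diagonal_eq_affine, affine_mul_affine (pauliZ_mul_self j)]
  match_scalars <;> simp <;> field_simp
  · linear_combination (-2) * ofReal_sqrt_two_sq - 2 * I_sq
  · linear_combination 2 * ofReal_sqrt_two_sq + 2 * I_sq

theorem embed_Tgate_mul_mul_conjTranspose_of_anticommute (j : Fin n)
    {s : Matrix (Fin n → Fin 2) (Fin n → Fin 2) ℂ} (hs : pauliZ j * s = -(s * pauliZ j)) :
    embed j Tgate * s * (embed j Tgate)ᴴ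
      = (√2 : ℂ)⁻¹ • (s - I • (pauliZ j * s)) := by
  rw [Tgate_eq_diagonal, embed_diagonal_conjTranspose, embed_diagonal_eq_affine,
    embed_diagonal_eq_affine, affine_mul_mul_affine_of_anticommute (pauliZ_mul_self j) hs]
  match_scalars <;> simp <;> field_simp <;> ring

theorem Commute.embed_Tgate_conjTranspose {j : Fin n}
    {x : Matrix (Fin n → Fin 2) (Fin n → Fin 2) ℂ} (h : Commute (pauliZ j) x) : Commute (embed j Tgate)ᴴ x := by
  rw [Tgate_eq_diagonal, embed_diagonal_conjTranspose, embed_diagonal_eq_affine]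
  exact h.affine_left _ _

end Qubit

theorem stmt_2_general {n m : ℕ} (j : Fin n)
    (s1 : Matrix (Fin n → Fin 2) (Fin n → Fin 2) ℂ)
    (g : Fin m → Matrix (Fin n → Fin 2) (Fin n → Fin 2) ℂ)
    (Zj Tj : Matrix (Fin n → Fin 2) (Fin n → Fin 2) ℂ)
    (hZj : Zj = pauliString (fun k => if k = j then (3 : Fin 4) else 0))
    (hTj : Tj = embed j Tgate)
    (hanti : Zj * s1 = -(s1 * Zj))
    (hcommZ : ∀ i, Zj * g i = g i * Zj)
    (ρ₀ : Matrix (Fin n → Fin 2) (Fin n → Fin 2) ℂ)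
    (hρ₀ : ρ₀ = ((1 : ℂ)/2^n) •
      ((1 + s1) * ((List.finRange m).map (fun i => 1 + g i)).prod)) :
    Tj * ρ₀ * Tjᴴ = ((1 : ℂ)/2^n) •
      ((1 + ((Real.sqrt 2 : ℂ))⁻¹ • (s1 - Complex.I • (Zj * s1))) *
        ((List.finRange m).map (fun i => 1 + g i)).prod) := by
  subst hZj hTj hρ₀
  set P := ((List.finRange m).map (fun i => 1 + g i)).prod
  have hP : Commute (embed j Tgate)ᴴ P := by
    refine Commute.list_prod_right _ _ fun M hM => ?_
    obtain ⟨i, -, rfl⟩ := List.mem_map.mp hM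
    exact Commute.embed_Tgate_conjTranspose ((Commute.one_right _).add_right (hcommZ i))
  calc embed j Tgate * ((1 / 2 ^ n : ℂ) • ((1 + s1) * P)) * (embed j Tgate)ᴴ
      = (1 / 2 ^ n : ℂ) • ((embed j Tgate * (embed j Tgate)ᴴ
          + embed j Tgate * s1 * (embed j Tgate)ᴴ) * P) := by
        rw [mul_smul_comm, smul_mul_assoc, ← mul_assoc, mul_assoc _ P, ← hP.eq, ← mul_assoc,
          mul_add, add_mul, mul_one]
    _ = _ := by
        rw [embed_Tgate_mul_conjTranspose, embed_Tgate_mul_mul_conjTranspose_of_anticommute j hanti]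

/-- for a pure stabilizer state `ρ₀ = 2^{-n}(I+s₁)∏ᵢ(I+gᵢ)` whose generator `s₁`
anticommutes with `Z_j` while all the `gᵢ` commute with `Z_j`, the `T` gate on qubit `j`
produces `TρT† = 2^{-n}(I + (Z̄ − Ȳ)/√2)∏ᵢ(I+gᵢ)` with `X̄ = Z_j`, `Z̄ = s₁`, `Ȳ = iX̄Z̄`. -/
theorem stmt_2 {n m : ℕ} (hnm : n = m + 1) (j : Fin n)
    (s1 : Matrix (Fin n → Fin 2) (Fin n → Fin 2) ℂ)
    (g : Fin m → Matrix (Fin n → Fin 2) (Fin n → Fin 2) ℂ)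
    (Zj Tj : Matrix (Fin n → Fin 2) (Fin n → Fin 2) ℂ)
    (hZj : Zj = pauliString (fun k => if k = j then (3 : Fin 4) else 0))
    (hTj : Tj = embed j Tgate)
    (hs1 : IsPauliPM s1) (hg : ∀ i, IsPauliPM (g i))
    (hanti : Zj * s1 = -(s1 * Zj))
    (hcommZ : ∀ i, Zj * g i = g i * Zj)
    (hcomm : ∀ i i', g i * g i' = g i' * g i)
    (hcs1 : ∀ i, s1 * g i = g i * s1)
    (ρ₀ : Matrix (Fin n → Fin 2) (Fin n → Fin 2) ℂ)
    (hρ₀ : ρ₀ = ((1 : ℂ)/2^n) •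
      ((1 + s1) * ((List.finRange m).map (fun i => 1 + g i)).prod)) :
    Tj * ρ₀ * Tjᴴ = ((1 : ℂ)/2^n) •
      ((1 + ((Real.sqrt 2 : ℂ))⁻¹ • (s1 - Complex.I • (Zj * s1))) *
        ((List.finRange m).map (fun i => 1 + g i)).prod) :=
  stmt_2_general j s1 g Zj Tj hZj hTj hanti hcommZ ρ₀ hρ₀
end

section
/- Let ρ_A be the reduced state on a subsystem A of a pure state with one unit of magic, written in the bipartite magic gauge: ρ_A = 2^{-|A|}(I_A + (Z̄_A − Ȳ_A)/√2) ∏_{i=1}^{k} (I_A + a_i), where Z̄_A, Ȳ_A are anticommuting Hermitian Paulis on A commuting with all a_i, and a_1,…,a_k are independent commuting Hermitian Paulis on A generating a group without −I. Then the normalized Pauli spectrum of ρ_A has 2^k entries of one value and 2^{k+1} entries of half that value, yielding M̃₂(ρ_A) = log₂(4/3). -/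
open Matrix BigOperators Finset

/-
Expanding `∏ᵢ (1 + aᵢ) = Σ_f a^f` writes `2^|A| ρ_A` as a combination of the `3·2^k` signed
Pauli operators `g, Z̄g, Ȳg` (`g ∈ ⟨aᵢ⟩`) with coefficients `1, 1/√2, −1/√2`. Independence and
the non-coincidence conditions mean that these operators carry pairwise distinct Pauli strings,
so by orthogonality of Pauli strings under the trace, `Tr(ρ_A P)` is `±1` on the `2^k` strings
of `⟨aᵢ⟩`, `±1/√2` on the `2^(k+1)` strings of the cosets `Z̄⟨aᵢ⟩, Ȳ⟨aᵢ⟩`, and `0` elsewhere.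
Hence `Σ Tr⁴ / Σ Tr² = 2^k (1 + 1/4 + 1/4) / (2^k · 2) = 3/4`.
-/

local notation "𝕄[" n "]" => Matrix (Fin n → Fin 2) (Fin n → Fin 2) ℂ

section PiKronecker

variable {ι α β γ R : Type*} [Fintype ι] [CommSemiring R]

def piKronecker (A : ι → Matrix α β R) : Matrix (ι → α) (ι → β) R :=
  Matrix.of fun i j => ∏ k, A k (i k) (j k)

theorem piKronecker_mul [DecidableEq ι] [Fintype β] (A : ι → Matrix α β R) (B : ι → Matrix β γ R) :
    piKronecker A * piKronecker B = piKronecker fun k => A k * B k := by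
  ext i j
  simp only [piKronecker, Matrix.mul_apply, Matrix.of_apply, ← Finset.prod_mul_distrib]
  exact (Fintype.prod_sum fun k x => A k (i k) x * B k x (j k)).symm

theorem trace_piKronecker [DecidableEq ι] [Fintype α] (A : ι → Matrix α α R) :
    (piKronecker A).trace = ∏ k, (A k).trace := by
  simp only [Matrix.trace, Matrix.diag, piKronecker, Matrix.of_apply]
  exact (Fintype.prod_sum fun k x => A k x x).symm

theorem piKronecker_smul (c : ι → R) (A : ι → Matrix α β R) :
    piKronecker (fun k => c k • A k) = (∏ k, c k) • piKronecker A := by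
  ext i j
  simp [piKronecker, Finset.prod_mul_distrib]

theorem piKronecker_one [DecidableEq α] :
    piKronecker (fun _ : ι => (1 : Matrix α α R)) = 1 := by
  ext i j
  by_cases h : i = j
  · subst h
    simp [piKronecker]
  · obtain ⟨k, hk⟩ := Function.ne_iff.mp h
    simp [piKronecker, Matrix.one_apply_ne h, Finset.prod_eq_zero (Finset.mem_univ k),
      Matrix.one_apply_ne hk]

end PiKronecker

section PauliAlgebra

variable {n : ℕ}

theorem pauliString_eq_piKronecker (s : Fin n → Fin 4) :
    pauliString s = piKronecker (pauli1 ∘ s) := rfl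

/-- Labelling `I, X, Y, Z` by `0, 1, 2, 3`, i.e. by the bit pairs `00, 01, 10, 11`, the product
of two Paulis is the Pauli labelled by the XOR of the labels, up to the phase in this table. -/
def pauliPhase (a b : Fin 4) : ℂ :=
  ![![1, 1, 1, 1], ![1, 1, Complex.I, -Complex.I], ![1, -Complex.I, 1, Complex.I],
    ![1, Complex.I, -Complex.I, 1]] a b

theorem pauli1_mul (a b : Fin 4) : pauli1 a * pauli1 b = pauliPhase a b • pauli1 (a ^^^ b) := by
  fin_cases a <;> fin_cases b <;>
    · ext i j
      fin_cases i <;> fin_cases j <;>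
        simp [pauli1, pauliPhase, Matrix.mul_apply, Fin.sum_univ_two]

theorem pauli1_mul_self (a : Fin 4) : pauli1 a * pauli1 a = 1 := by
  fin_cases a <;> simp [pauli1, ← Matrix.ext_iff, Fin.forall_fin_two]

theorem trace_pauli1_mul (a b : Fin 4) :
    (pauli1 a * pauli1 b).trace = if a = b then 2 else 0 := by
  fin_cases a <;> fin_cases b <;> simp [pauli1, Matrix.trace, Fin.sum_univ_two] <;> norm_num

theorem pauliString_mul (s t : Fin n → Fin 4) :
    pauliString s * pauliString t =
      (∏ k, pauliPhase (s k) (t k)) • pauliString (fun k => s k ^^^ t k) := by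
  simp only [pauliString_eq_piKronecker, piKronecker_mul, ← piKronecker_smul]
  congr 1
  ext1 k
  exact pauli1_mul _ _

theorem pauliString_mul_self (s : Fin n → Fin 4) : pauliString s * pauliString s = 1 := by
  simp only [pauliString_eq_piKronecker, piKronecker_mul]
  convert piKronecker_one (ι := Fin n) (α := Fin 2) (R := ℂ)
  exact pauli1_mul_self _

theorem trace_pauliString_mul (s t : Fin n → Fin 4) :
    (pauliString s * pauliString t).trace = if s = t then 2 ^ n else 0 := by
  simp only [pauliString_eq_piKronecker, piKronecker_mul, trace_piKronecker, Function.comp_apply,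
    trace_pauli1_mul, Fintype.prod_ite_zero, funext_iff]
  simp

end PauliAlgebra

section SignedPauli

variable {n : ℕ}

theorem pauliString_zero : pauliString (0 : Fin n → Fin 4) = 1 :=
  piKronecker_one

theorem isPauliPM_one : IsPauliPM (1 : 𝕄[n]) :=
  ⟨1, 0, Or.inl rfl, by rw [pauliString_zero, one_smul]⟩

theorem IsPauliPM.mul_self {M : 𝕄[n]} (h : IsPauliPM M) : M * M = 1 := by
  obtain ⟨ε, s, hε, rfl⟩ := h
  rw [smul_mul_smul, pauliString_mul_self]
  rcases hε with rfl | rfl <;> norm_num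

theorem isPauliPM_smul_of_mul_self {c : ℂ} {s : Fin n → Fin 4}
    (h : (c • pauliString s) * (c • pauliString s) = 1) : IsPauliPM (c • pauliString s) := by
  rw [smul_mul_smul, pauliString_mul_self] at h
  have hc : c * c = 1 := by simpa using congrFun₂ h 0 0
  refine ⟨c, s, ?_, rfl⟩
  rcases mul_self_eq_one_iff.mp hc with h | h <;> simp [h]

/-- A product of commuting signed Paulis is a Pauli up to a phase, and it squares to `1`,
so the phase is `±1`. -/
theorem IsPauliPM.mul {M N : 𝕄[n]} (hM : IsPauliPM M) (hN : IsPauliPM N) (hMN : Commute M N) :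
    IsPauliPM (M * N) := by
  have hsq : M * N * (M * N) = 1 := by
    rw [hMN.symm.mul_mul_mul_comm, hM.mul_self, hN.mul_self, one_mul]
  obtain ⟨ε, s, -, rfl⟩ := hM
  obtain ⟨δ, t, -, rfl⟩ := hN
  rw [smul_mul_smul, pauliString_mul, smul_smul] at hsq ⊢
  exact isPauliPM_smul_of_mul_self hsq

theorem eq_mul_sign_smul_of_eq_smul_pauliString {M N : 𝕄[n]} {ε δ : ℂ} {t : Fin n → Fin 4}
    (hδ : δ = 1 ∨ δ = -1) (hM : M = ε • pauliString t) (hN : N = δ • pauliString t) :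
    M = (ε * δ) • N := by
  rw [hM, hN, smul_smul, mul_assoc]
  rcases hδ with rfl | rfl <;> simp

theorem trace_smul_sum_smul_pauliString_mul {ι : Type*} [Fintype ι] {s : ι → Fin n → Fin 4}
    (hs : Function.Injective s) (d : ι → ℂ) (P : Fin n → Fin 4) :
    ((((1 : ℂ) / 2 ^ n) • ∑ j, d j • pauliString (s j)) * pauliString P).trace =
      Function.extend s d 0 P := by
  simp only [Matrix.smul_mul, Matrix.sum_mul, Matrix.trace_smul, Matrix.trace_sum,
    trace_pauliString_mul, smul_eq_mul, mul_ite, mul_zero]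
  by_cases hP : ∃ j, s j = P
  · obtain ⟨j, rfl⟩ := hP
    rw [hs.extend_apply, Finset.sum_eq_single j (fun i _ hi => if_neg (hs.ne hi)) (by simp),
      if_pos rfl]
    field_simp
  · rw [Function.extend_apply' _ _ _ hP, Finset.sum_eq_zero fun j _ => if_neg fun h => hP ⟨j, h⟩,
      mul_zero, Pi.zero_apply]

end SignedPauli

section GroupElements

variable {n m : ℕ}

theorem grpElem_succ (g : Fin (m + 1) → 𝕄[n]) (f : Fin (m + 1) → Bool) :
    grpElem g f = (if f 0 then g 0 else 1) * grpElem (fun i => g i.succ) (fun i => f i.succ) := by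
  simp [grpElem, List.finRange_succ, Function.comp_def]

theorem grpElem_zero (g : Fin m → 𝕄[n]) : grpElem g (fun _ => false) = 1 := by
  simp [grpElem]

theorem commute_grpElem {x : 𝕄[n]} {g : Fin m → 𝕄[n]} (h : ∀ i, Commute x (g i))
    (f : Fin m → Bool) : Commute x (grpElem g f) := by
  refine Commute.list_prod_right _ _ fun y hy => ?_
  obtain ⟨i, -, rfl⟩ := List.mem_map.mp hy
  split_ifs
  exacts [h i, Commute.one_right x]

theorem isPauliPM_grpElem {g : Fin m → 𝕄[n]} (hg : ∀ i, IsPauliPM (g i))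
    (hcomm : ∀ i j, Commute (g i) (g j)) (f : Fin m → Bool) : IsPauliPM (grpElem g f) := by
  induction m with
  | zero => simpa [grpElem] using isPauliPM_one
  | succ m ih =>
    rw [grpElem_succ]
    have hhead : IsPauliPM (if f 0 then g 0 else 1) := by
      split_ifs
      exacts [hg 0, isPauliPM_one]
    refine hhead.mul (ih (fun i => hg _) (fun i j => hcomm _ _) _) (commute_grpElem (fun i => ?_) _)
    split_ifs
    exacts [hcomm 0 i.succ, Commute.one_left _]

theorem grpElem_mul_grpElem {g : Fin m → 𝕄[n]} (hcomm : ∀ i j, Commute (g i) (g j))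
    (hsq : ∀ i, g i * g i = 1) (f f' : Fin m → Bool) :
    grpElem g f * grpElem g f' = grpElem g (fun i => xor (f i) (f' i)) := by
  induction m with
  | zero => simp [grpElem]
  | succ m ih =>
    simp only [grpElem_succ]
    have hhead :
        Commute (if f' 0 then g 0 else 1) (grpElem (fun i => g i.succ) fun i => f i.succ) :=
      commute_grpElem (fun i => by split_ifs; exacts [hcomm 0 i.succ, Commute.one_left _]) _
    rw [hhead.symm.mul_mul_mul_comm, ih (fun i j => hcomm _ _) (fun i => hsq _)]
    congr 1
    cases f 0 <;> cases f' 0 <;> simp [hsq 0]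

theorem grpElem_mul_self {g : Fin m → 𝕄[n]} (hcomm : ∀ i j, Commute (g i) (g j))
    (hsq : ∀ i, g i * g i = 1) (f : Fin m → Bool) : grpElem g f * grpElem g f = 1 := by
  simpa [grpElem_zero] using grpElem_mul_grpElem hcomm hsq f f

theorem list_prod_one_add_eq_sum_grpElem (g : Fin m → 𝕄[n]) :
    ((List.finRange m).map fun i => 1 + g i).prod = ∑ f : Fin m → Bool, grpElem g f := by
  induction m with
  | zero => simp [grpElem]
  | succ m ih =>
    rw [List.finRange_succ, List.map_cons, List.prod_cons, List.map_map, Function.comp_def, ih,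
      ← (Fin.consEquiv fun _ => Bool).sum_comp, Fintype.sum_prod_type, Fintype.sum_bool]
    simp [grpElem_succ, Fin.consEquiv, Finset.mul_sum, add_mul, add_comm, Finset.sum_add_distrib]

end GroupElements

section SignedGroupElements

variable {n m : ℕ} {g : Fin m → 𝕄[n]}

theorem eq_of_grpElem_eq_smul (hcomm : ∀ i j, Commute (g i) (g j)) (hsq : ∀ i, g i * g i = 1)
    (hindep : ∀ f f' : Fin m → Bool, grpElem g f = grpElem g f' → f = f')
    (hnoNegI : ∀ f : Fin m → Bool, grpElem g f ≠ -1) {c : ℂ} (hc : c = 1 ∨ c = -1)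
    {f f' : Fin m → Bool} (h : grpElem g f = c • grpElem g f') : f = f' := by
  rcases hc with rfl | rfl
  · exact hindep f f' (by simpa using h)
  · refine absurd ?_ (hnoNegI fun i => xor (f i) (f' i))
    rw [← grpElem_mul_grpElem hcomm hsq, h, neg_one_smul, neg_mul, grpElem_mul_self hcomm hsq]

theorem eq_smul_mul_grpElem_of_mul_grpElem_eq (hcomm : ∀ i j, Commute (g i) (g j))
    (hsq : ∀ i, g i * g i = 1) {X Y : 𝕄[n]} {c : ℂ} (hc : c = 1 ∨ c = -1)
    {f f' : Fin m → Bool} (h : X * grpElem g f = c • (Y * grpElem g f')) :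
    Y = c • (X * grpElem g fun i => xor (f i) (f' i)) := by
  rw [← grpElem_mul_grpElem hcomm hsq, ← mul_assoc, h, smul_mul_assoc, mul_assoc,
    grpElem_mul_self hcomm hsq, mul_one, smul_smul]
  rcases hc with rfl | rfl <;> simp

end SignedGroupElements

section MagicGauge

variable {q k : ℕ} {a : Fin k → 𝕄[q]} {Zb Yb : 𝕄[q]}

theorem isPauliPM_gaugeTerm (ha : ∀ i, IsPauliPM (a i)) (hcomm : ∀ i j, Commute (a i) (a j))
    (hZb : IsPauliPM Zb) (hYb : IsPauliPM Yb) (hZcomm : ∀ i, Commute Zb (a i))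
    (hYcomm : ∀ i, Commute Yb (a i)) (j : Fin 3 × (Fin k → Bool)) :
    IsPauliPM (![1, Zb, Yb] j.1 * grpElem a j.2) := by
  obtain ⟨l, f⟩ := j
  have hG := isPauliPM_grpElem ha hcomm f
  fin_cases l
  · simpa using hG
  · exact hZb.mul hG (commute_grpElem hZcomm f)
  · exact hYb.mul hG (commute_grpElem hYcomm f)

/-- Two gauge terms with the same Pauli string agree up to a sign; cancelling the group element
turns this into one of the excluded coincidences `Z̄ ~ ±g`, `Ȳ ~ ±g`, `Ȳ ~ ±Z̄g`, or into
`g = ±g'` inside `⟨aᵢ⟩`. -/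
theorem injective_of_gaugeTerm_eq_smul_pauliString (hcomm : ∀ i j, Commute (a i) (a j))
    (hsq : ∀ i, a i * a i = 1) (hindep : ∀ f f' : Fin k → Bool, grpElem a f = grpElem a f' → f = f')
    (hnoNegI : ∀ f : Fin k → Bool, grpElem a f ≠ -1) (hZsq : Zb * Zb = 1) (hYsq : Yb * Yb = 1)
    (hZnot : ∀ (f : Fin k → Bool) (ε : ℂ), (ε = 1 ∨ ε = -1) → Zb ≠ ε • grpElem a f)
    (hYnot : ∀ (f : Fin k → Bool) (ε : ℂ), (ε = 1 ∨ ε = -1) → Yb ≠ ε • grpElem a f)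
    (hYZnot : ∀ (f : Fin k → Bool) (ε : ℂ), (ε = 1 ∨ ε = -1) → Yb ≠ ε • (Zb * grpElem a f))
    {ε : Fin 3 × (Fin k → Bool) → ℂ} {s : Fin 3 × (Fin k → Bool) → Fin q → Fin 4}
    (hε : ∀ j, ε j = 1 ∨ ε j = -1)
    (hs : ∀ j, ![1, Zb, Yb] j.1 * grpElem a j.2 = ε j • pauliString (s j)) :
    Function.Injective s := by
  rintro ⟨l, f⟩ ⟨l', f'⟩ hst
  wlog hle : l ≤ l' generalizing l l' f f'
  · exact (this l' f' l f hst.symm (le_of_not_ge hle)).symm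
  set c := ε (l, f) * ε (l', f')
  have hc : c = 1 ∨ c = -1 := by
    rcases hε (l, f) with h | h <;> rcases hε (l', f') with h' | h' <;> simp [c, h, h']
  have h : ![1, Zb, Yb] l * grpElem a f = c • (![1, Zb, Yb] l' * grpElem a f') :=
    eq_mul_sign_smul_of_eq_smul_pauliString (hε _) (hst ▸ hs (l, f)) (hs (l', f'))
  obtain rfl : l = l' := by
    by_contra hne
    have hL := eq_smul_mul_grpElem_of_mul_grpElem_eq hcomm hsq hc h
    fin_cases l <;> fin_cases l' <;> simp at hle hne hL
    exacts [hZnot _ _ hc hL, hYnot _ _ hc hL, hYZnot _ _ hc hL]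
  have hLsq : ![1, Zb, Yb] l * ![1, Zb, Yb] l = 1 := by fin_cases l <;> simp [hZsq, hYsq]
  have hG : grpElem a f = c • grpElem a f' := by
    rw [← one_mul (grpElem a f), ← hLsq, mul_assoc, h, mul_smul_comm, ← mul_assoc, hLsq, one_mul]
  rw [eq_of_grpElem_eq_smul hcomm hsq hindep hnoNegI hc hG]

theorem one_add_smul_sub_mul_prod_one_add (r : ℂ) :
    (1 + r • (Zb - Yb)) * ((List.finRange k).map fun i => 1 + a i).prod =
      ∑ j : Fin 3 × (Fin k → Bool), ![1, r, -r] j.1 • (![1, Zb, Yb] j.1 * grpElem a j.2) := by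
  rw [list_prod_one_add_eq_sum_grpElem, Fintype.sum_prod_type, Fin.sum_univ_three]
  simp [Finset.mul_sum, add_mul, Finset.sum_add_distrib, sub_eq_add_neg, add_assoc]

theorem gaugeCoeff_mul_sign_sq {ε : ℂ} (hε : ε = 1 ∨ ε = -1) (l : Fin 3) :
    (![1, (√2 : ℂ)⁻¹, -(√2 : ℂ)⁻¹] l * ε) ^ 2 = ![1, 1 / 2, 1 / 2] l := by
  have hsqrt : (√2 : ℂ)⁻¹ ^ 2 = 1 / 2 := by
    rw [inv_pow, ← Complex.ofReal_pow, Real.sq_sqrt zero_le_two]; norm_num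
  rcases hε with rfl | rfl <;> fin_cases l <;> simp [hsqrt]

end MagicGauge

section Spectrum

variable {α κ : Type*} [Fintype α] {s : Fin 3 × α → κ} {d : Fin 3 × α → ℂ}

theorem sum_comp_extend_sq [Fintype κ] {M : Type*} [AddCommMonoid M] (hs : Function.Injective s)
    (hd : ∀ j, d j ^ 2 = ![1, 1 / 2, 1 / 2] j.1) (F : ℂ → M) (hF : F 0 = 0) :
    ∑ P, F (Function.extend s d 0 P ^ 2) = Fintype.card α • (F 1 + F (1 / 2) + F (1 / 2)) := by
  rw [← Fintype.sum_of_injective s hs (fun j => F (d j ^ 2))]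
  · simp [Fintype.sum_prod_type_right, Fin.sum_univ_three, hd, Finset.sum_const]
  · intro P hP
    rw [Function.extend_apply' _ _ _ hP]
    simpa using hF
  · intro j
    rw [hs.extend_apply]

theorem card_extend_sq_eq_one [Fintype κ] (hs : Function.Injective s)
    (hd : ∀ j, d j ^ 2 = ![1, 1 / 2, 1 / 2] j.1) :
    Nat.card {P | Function.extend s d 0 P ^ 2 = 1} = Fintype.card α := by
  classical
  simp only [Nat.card_eq_fintype_card, Fintype.card_subtype, Finset.card_filter,
    Set.mem_ofPred_eq]
  rw [sum_comp_extend_sq hs hd (fun x => if x = 1 then 1 else 0) (by norm_num)]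
  norm_num

theorem card_extend_sq_eq_half [Fintype κ] (hs : Function.Injective s)
    (hd : ∀ j, d j ^ 2 = ![1, 1 / 2, 1 / 2] j.1) :
    Nat.card {P | Function.extend s d 0 P ^ 2 = 1 / 2} = 2 * Fintype.card α := by
  classical
  simp only [Nat.card_eq_fintype_card, Fintype.card_subtype, Finset.card_filter,
    Set.mem_ofPred_eq]
  rw [sum_comp_extend_sq hs hd (fun x => if x = 1 / 2 then 1 else 0) (by norm_num)]
  norm_num [mul_comm]

theorem extend_sq_eq_one_or_eq_half_or_eq_zero (hs : Function.Injective s)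
    (hd : ∀ j, d j ^ 2 = ![1, 1 / 2, 1 / 2] j.1) (P : κ) :
    Function.extend s d 0 P ^ 2 = 1 ∨ Function.extend s d 0 P ^ 2 = 1 / 2 ∨
      Function.extend s d 0 P = 0 := by
  by_cases hP : ∃ j, s j = P
  · obtain ⟨⟨l, f⟩, rfl⟩ := hP
    rw [hs.extend_apply, hd]
    fin_cases l <;> simp
  · simp [Function.extend_apply' _ _ _ hP]

theorem sum_extend_pow_four_div_sum_extend_sq [Fintype κ] [Nonempty α] (hs : Function.Injective s)
    (hd : ∀ j, d j ^ 2 = ![1, 1 / 2, 1 / 2] j.1) :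
    (∑ P, Function.extend s d 0 P ^ 4) / ∑ P, Function.extend s d 0 P ^ 2 = 3 / 4 := by
  simp only [show ∀ x : ℂ, x ^ 4 = (x ^ 2) ^ 2 by intro x; ring]
  rw [sum_comp_extend_sq hs hd (· ^ 2) (by norm_num),
    sum_comp_extend_sq hs hd (fun x => x) rfl, nsmul_eq_mul, nsmul_eq_mul,
    mul_div_mul_left _ _ (Nat.cast_ne_zero.mpr Fintype.card_ne_zero)]
  norm_num

end Spectrum

theorem stmt_10_general {q k : ℕ}
    (a : Fin k → Matrix (Fin q → Fin 2) (Fin q → Fin 2) ℂ)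
    (Zb Yb : Matrix (Fin q → Fin 2) (Fin q → Fin 2) ℂ)
    (ha : ∀ i, IsPauliPM (a i))
    (hcomm : ∀ i i', a i * a i' = a i' * a i)
    (hindep : ∀ f f' : Fin k → Bool, grpElem a f = grpElem a f' → f = f')
    (hnoNegI : ∀ f : Fin k → Bool, grpElem a f ≠ -1)
    (hZb : IsPauliPM Zb) (hYb : IsPauliPM Yb)
    (hZcomm : ∀ i, Zb * a i = a i * Zb) (hYcomm : ∀ i, Yb * a i = a i * Yb)
    (hZnot : ∀ (f : Fin k → Bool) (ε : ℂ), (ε = 1 ∨ ε = -1) → Zb ≠ ε • grpElem a f)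
    (hYnot : ∀ (f : Fin k → Bool) (ε : ℂ), (ε = 1 ∨ ε = -1) → Yb ≠ ε • grpElem a f)
    (hYZnot : ∀ (f : Fin k → Bool) (ε : ℂ), (ε = 1 ∨ ε = -1) → Yb ≠ ε • (Zb * grpElem a f))
    (ρA : Matrix (Fin q → Fin 2) (Fin q → Fin 2) ℂ)
    (hρA : ρA = ((1 : ℂ)/2 ^ q) •
      ((1 + ((Real.sqrt 2 : ℂ))⁻¹ • (Zb - Yb)) *
        ((List.finRange k).map (fun i => 1 + a i)).prod)) :
    Nat.card {P : Fin q → Fin 4 | ((ρA * pauliString P).trace) ^ 2 = 1} = 2 ^ k ∧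
    Nat.card {P : Fin q → Fin 4 | ((ρA * pauliString P).trace) ^ 2 = 1 / 2} = 2 ^ (k + 1) ∧
    (∀ P : Fin q → Fin 4, ((ρA * pauliString P).trace) ^ 2 = 1 ∨
      ((ρA * pauliString P).trace) ^ 2 = 1 / 2 ∨ (ρA * pauliString P).trace = 0) ∧
    sre2 ρA = Real.logb 2 (4 / 3) := by
  classical
  choose ε s hε hs using isPauliPM_gaugeTerm ha hcomm hZb hYb hZcomm hYcomm
  have hinj := injective_of_gaugeTerm_eq_smul_pauliString hcomm (fun i => (ha i).mul_self) hindep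
    hnoNegI hZb.mul_self hYb.mul_self hZnot hYnot hYZnot hε hs
  set d : Fin 3 × (Fin k → Bool) → ℂ := fun j => ![1, (√2 : ℂ)⁻¹, -(√2 : ℂ)⁻¹] j.1 * ε j
  have htr : ∀ P, (ρA * pauliString P).trace = Function.extend s d 0 P := by
    intro P
    simp only [hρA, one_add_smul_sub_mul_prod_one_add, hs, smul_smul,
      ← trace_smul_sum_smul_pauliString_mul hinj, d]
  have hd : ∀ j, d j ^ 2 = ![1, 1 / 2, 1 / 2] j.1 := fun j => gaugeCoeff_mul_sign_sq (hε j) j.1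
  simp only [sre2, htr, card_extend_sq_eq_one hinj hd, card_extend_sq_eq_half hinj hd,
    sum_extend_pow_four_div_sum_extend_sq hinj hd]
  refine ⟨by simp, by simp [pow_succ, mul_comm], extend_sq_eq_one_or_eq_half_or_eq_zero hinj hd, ?_⟩
  rw [show (3 / 4 : ℂ).re = (4 / 3)⁻¹ by norm_num, Real.logb_inv, neg_neg]

/-- bipartite magic gauge, case both logicals survive: for the reduced state
`ρ_A = 2^{-|A|}(I + (Z̄_A − Ȳ_A)/√2)∏ᵢ(I + aᵢ)` on a `q`-qubit subsystem `A`, with `Z̄_A, Ȳ_A`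
anticommuting Hermitian Paulis commuting with the independent commuting generators `aᵢ`
(whose group avoids `−I`), and neither `Z̄_A`, `Ȳ_A` nor `Ȳ_AZ̄_A⟨aᵢ⟩`-type collisions in
`±⟨aᵢ⟩`, the normalized Pauli spectrum has `2^k` entries of one value and `2^{k+1}` entries
of half that value, and `M̃₂(ρ_A) = log₂(4/3)`. -/
theorem stmt_10 {q k : ℕ}
    (a : Fin k → Matrix (Fin q → Fin 2) (Fin q → Fin 2) ℂ)
    (Zb Yb : Matrix (Fin q → Fin 2) (Fin q → Fin 2) ℂ)
    (ha : ∀ i, IsPauliPM (a i))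
    (hcomm : ∀ i i', a i * a i' = a i' * a i)
    (hindep : ∀ f f' : Fin k → Bool, grpElem a f = grpElem a f' → f = f')
    (hnoNegI : ∀ f : Fin k → Bool, grpElem a f ≠ -1)
    (hZb : IsPauliPM Zb) (hYb : IsPauliPM Yb)
    (hZcomm : ∀ i, Zb * a i = a i * Zb) (hYcomm : ∀ i, Yb * a i = a i * Yb)
    (hanti : Zb * Yb = -(Yb * Zb))
    (hZnot : ∀ (f : Fin k → Bool) (ε : ℂ), (ε = 1 ∨ ε = -1) → Zb ≠ ε • grpElem a f)
    (hYnot : ∀ (f : Fin k → Bool) (ε : ℂ), (ε = 1 ∨ ε = -1) → Yb ≠ ε • grpElem a f)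
    (hYZnot : ∀ (f : Fin k → Bool) (ε : ℂ), (ε = 1 ∨ ε = -1) → Yb ≠ ε • (Zb * grpElem a f))
    (ρA : Matrix (Fin q → Fin 2) (Fin q → Fin 2) ℂ)
    (hρA : ρA = ((1 : ℂ)/2 ^ q) •
      ((1 + ((Real.sqrt 2 : ℂ))⁻¹ • (Zb - Yb)) *
        ((List.finRange k).map (fun i => 1 + a i)).prod)) :
    Nat.card {P : Fin q → Fin 4 | ((ρA * pauliString P).trace) ^ 2 = 1} = 2 ^ k ∧
    Nat.card {P : Fin q → Fin 4 | ((ρA * pauliString P).trace) ^ 2 = 1 / 2} = 2 ^ (k + 1) ∧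
    (∀ P : Fin q → Fin 4, ((ρA * pauliString P).trace) ^ 2 = 1 ∨
      ((ρA * pauliString P).trace) ^ 2 = 1 / 2 ∨ (ρA * pauliString P).trace = 0) ∧
    sre2 ρA = Real.logb 2 (4 / 3) :=
  stmt_10_general a Zb Yb ha hcomm hindep hnoNegI hZb hYb hZcomm hYcomm hZnot hYnot hYZnot ρA hρA
end
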